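/- For every index m in {t, x, y, z}, the null-rotation generators a_m = Γ_p Γ_m − Γ_q Γ_m and b_m = Γ_p Γ_m + Γ_q Γ_m satisfy a_m² = 0 and b_m² = 0; consequently, for every real θ, (I₄ + (θ/2) • a_m)(I₄ − (θ/2) • a_m) = I₄ and (I₄ + (θ/2) • b_m)(I₄ − (θ/2) • b_m) = I₄. -/

import Mathlib

open Quaternion Matrix

/-- The split quaternions, with K = i, L = j, KL = k. -/
notation "ℍ'" => QuaternionAlgebra ℝ (-1) 0 1

/-- A = ℍ' ⊗_ℝ ℂ, realized as the quaternion algebra over ℂ with i² = −1, j² = 1. -/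
abbrev SplitQC := QuaternionAlgebra ℂ (-1) 0 1

namespace SplitQC
/-- K, the split-quaternion unit with K² = −1 -/
def K : SplitQC := ⟨0, 1, 0, 0⟩
/-- L, the split-quaternion unit with L² = 1 -/
def L : SplitQC := ⟨0, 0, 1, 0⟩
/-- KL, with (KL)² = 1 -/
def KL : SplitQC := ⟨0, 0, 0, 1⟩
/-- ℓ = 1 ⊗ i, the complex unit -/
def ll : SplitQC := ⟨Complex.I, 0, 0, 0⟩
end SplitQC

open SplitQC

/-- Index set {x, y, z, t, q, p} for the gamma matrices. -/
inductive Idx | x | y | z | t | q | p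
deriving DecidableEq

/-- The gamma matrices generating Cl(4,2). -/
def Γ : Idx → Matrix (Fin 4) (Fin 4) SplitQC
| Idx.x => !![0,0,0,1; 0,0,1,0; 0,1,0,0; 1,0,0,0]
| Idx.y => !![0,0,0,-ll; 0,0,ll,0; 0,-ll,0,0; ll,0,0,0]
| Idx.z => !![0,0,1,0; 0,0,0,-1; 1,0,0,0; 0,-1,0,0]
| Idx.t => !![0,0,L,0; 0,0,0,L; -L,0,0,0; 0,-L,0,0]
| Idx.q => !![0,0,K,0; 0,0,0,K; -K,0,0,0; 0,-K,0,0]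
| Idx.p => !![0,0,KL,0; 0,0,0,KL; -KL,0,0,0; 0,-KL,0,0]

/-- The metric of signature (4,2). -/
def g : Idx → Idx → ℝ
| Idx.x, Idx.x => 1 | Idx.y, Idx.y => 1 | Idx.z, Idx.z => 1 | Idx.q, Idx.q => 1
| Idx.t, Idx.t => -1 | Idx.p, Idx.p => -1
| _, _ => 0

/-!
Write `a_m = (Γ_p - Γ_q) Γ_m` and `b_m = (Γ_p + Γ_q) Γ_m`. Since `g_pp + g_qq = 0`, the Clifford
relations make `n = Γ_p ± Γ_q` a null vector, `n² = 0`, and `n` anticommutes with `Γ_m` for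
`m ∉ {p, q}`; hence `(n Γ_m)² = -n² Γ_m² = 0`. A square-zero `N` gives
`(1 + sN)(1 - sN) = 1 - s²N² = 1`.
-/

section AnticommutingElements

variable {R : Type*} [Ring R] {e f u : R}

theorem sq_add_of_anticomm (h : e * f + f * e = 0) : (e + f) ^ 2 = e ^ 2 + f ^ 2 := by
  calc (e + f) ^ 2 = e ^ 2 + f ^ 2 + (e * f + f * e) := by noncomm_ring
    _ = e ^ 2 + f ^ 2 := by rw [h, add_zero]

theorem sq_sub_of_anticomm (h : e * f + f * e = 0) : (e - f) ^ 2 = e ^ 2 + f ^ 2 := by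
  calc (e - f) ^ 2 = e ^ 2 + f ^ 2 - (e * f + f * e) := by noncomm_ring
    _ = e ^ 2 + f ^ 2 := by rw [h, sub_zero]

theorem anticomm_add_left (he : e * u + u * e = 0) (hf : f * u + u * f = 0) :
    (e + f) * u + u * (e + f) = 0 := by
  calc (e + f) * u + u * (e + f) = (e * u + u * e) + (f * u + u * f) := by noncomm_ring
    _ = 0 := by rw [he, hf, add_zero]

theorem anticomm_sub_left (he : e * u + u * e = 0) (hf : f * u + u * f = 0) :
    (e - f) * u + u * (e - f) = 0 := by
  calc (e - f) * u + u * (e - f) = (e * u + u * e) - (f * u + u * f) := by noncomm_ring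
    _ = 0 := by rw [he, hf, sub_zero]

theorem sq_mul_eq_zero_of_anticomm (he : e ^ 2 = 0) (h : e * u + u * e = 0) : (e * u) ^ 2 = 0 := by
  have hue : u * e = -(e * u) := eq_neg_of_add_eq_zero_right h
  calc (e * u) ^ 2 = e * (u * e) * u := by noncomm_ring
    _ = -(e ^ 2 * u ^ 2) := by rw [hue]; noncomm_ring
    _ = 0 := by rw [he, zero_mul, neg_zero]

theorem one_add_mul_one_sub_of_sq_eq_zero (h : e ^ 2 = 0) : (1 + e) * (1 - e) = 1 := by
  calc (1 + e) * (1 - e) = 1 - e ^ 2 := by noncomm_ring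
    _ = 1 := by rw [h, sub_zero]

end AnticommutingElements

namespace SplitQC

@[simp] theorem K_mul_K : K * K = -1 := by ext <;> simp [K]
@[simp] theorem L_mul_L : L * L = 1 := by ext <;> simp [L]
@[simp] theorem KL_mul_KL : KL * KL = 1 := by ext <;> simp [KL]
@[simp] theorem ll_mul_ll : ll * ll = -1 := by ext <;> simp [ll]
@[simp] theorem K_mul_L : K * L = KL := by ext <;> simp [K, L, KL]
@[simp] theorem L_mul_K : L * K = -KL := by ext <;> simp [K, L, KL]
@[simp] theorem K_mul_KL : K * KL = -L := by ext <;> simp [K, L, KL]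
@[simp] theorem KL_mul_K : KL * K = L := by ext <;> simp [K, L, KL]
@[simp] theorem L_mul_KL : L * KL = -K := by ext <;> simp [K, L, KL]
@[simp] theorem KL_mul_L : KL * L = K := by ext <;> simp [K, L, KL]
@[simp] theorem K_mul_ll : K * ll = ll * K := by ext <;> simp [K, ll]
@[simp] theorem L_mul_ll : L * ll = ll * L := by ext <;> simp [L, ll]
@[simp] theorem KL_mul_ll : KL * ll = ll * KL := by ext <;> simp [KL, ll]

end SplitQC

theorem Matrix.zero_fin_four {α : Type*} [Zero α] :
    (0 : Matrix (Fin 4) (Fin 4) α) = !![0, 0, 0, 0; 0, 0, 0, 0; 0, 0, 0, 0; 0, 0, 0, 0] := by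
  ext i j
  fin_cases i <;> fin_cases j <;> rfl

theorem Matrix.one_fin_four {α : Type*} [Zero α] [One α] :
    (1 : Matrix (Fin 4) (Fin 4) α) = !![1, 0, 0, 0; 0, 1, 0, 0; 0, 0, 1, 0; 0, 0, 0, 1] := by
  ext i j
  fin_cases i <;> fin_cases j <;> rfl

theorem Γ_mul_self (i : Idx) : Γ i * Γ i = g i i • 1 := by
  rw [Matrix.one_fin_four]
  cases i <;> simp [Γ, g]

theorem Γ_anticomm {i j : Idx} (h : i ≠ j) : Γ i * Γ j + Γ j * Γ i = 0 := by
  rw [Matrix.zero_fin_four]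
  cases i <;> cases j <;> first | exact absurd rfl h | simp [Γ]

theorem sq_Γ_p_add_Γ_q : (Γ .p + Γ .q) ^ 2 = 0 := by
  rw [sq_add_of_anticomm (Γ_anticomm (by decide)), sq, sq, Γ_mul_self, Γ_mul_self, ← add_smul]
  norm_num [g]

theorem sq_Γ_p_sub_Γ_q : (Γ .p - Γ .q) ^ 2 = 0 := by
  rw [sq_sub_of_anticomm (Γ_anticomm (by decide)), sq, sq, Γ_mul_self, Γ_mul_self, ← add_smul]
  norm_num [g]

/-- The null-rotation generators a_m = Γ_p Γ_m − Γ_q Γ_m and b_m = Γ_p Γ_m + Γ_q Γ_m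
(m ∈ {t,x,y,z}) square to zero, so (I + (θ/2) a_m)(I − (θ/2) a_m) = I and likewise for b_m. -/
theorem null_rotation_generators_sq_zero (m : Idx)
    (hm : m = Idx.t ∨ m = Idx.x ∨ m = Idx.y ∨ m = Idx.z) (θ : ℝ) :
    let a := Γ Idx.p * Γ m - Γ Idx.q * Γ m
    let b := Γ Idx.p * Γ m + Γ Idx.q * Γ m
    a ^ 2 = 0 ∧ b ^ 2 = 0 ∧
    ((1 : Matrix (Fin 4) (Fin 4) SplitQC) + (θ / 2) • a) * (1 - (θ / 2) • a) = 1 ∧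
    ((1 : Matrix (Fin 4) (Fin 4) SplitQC) + (θ / 2) • b) * (1 - (θ / 2) • b) = 1 := by
  intro a b
  have hp : Γ .p * Γ m + Γ m * Γ .p = 0 :=
    Γ_anticomm (by rcases hm with rfl | rfl | rfl | rfl <;> decide)
  have hq : Γ .q * Γ m + Γ m * Γ .q = 0 :=
    Γ_anticomm (by rcases hm with rfl | rfl | rfl | rfl <;> decide)
  have ha : a ^ 2 = 0 := by
    rw [show a = (Γ .p - Γ .q) * Γ m from (sub_mul ..).symm]
    exact sq_mul_eq_zero_of_anticomm sq_Γ_p_sub_Γ_q (anticomm_sub_left hp hq)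
  have hb : b ^ 2 = 0 := by
    rw [show b = (Γ .p + Γ .q) * Γ m from (add_mul ..).symm]
    exact sq_mul_eq_zero_of_anticomm sq_Γ_p_add_Γ_q (anticomm_add_left hp hq)
  exact ⟨ha, hb, one_add_mul_one_sub_of_sq_eq_zero (by rw [smul_pow, ha, smul_zero]),
    one_add_mul_one_sub_of_sq_eq_zero (by rw [smul_pow, hb, smul_zero])⟩
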